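/- arXiv:1404.0590 — 5 statements merged into one kernel-verified Lean document; each statement's English description precedes it below -/
import Mathlib

section
/- Let f : X → X be a homeomorphism of an infinite compact metric space. If f is (m,n)-expansive with expansive constant δ, and n' ≤ n and m - n ≤ m' - n', then f is (m',n')-expansive with the same expansive constant δ. -/
/-! Adding `j` fresh points to a set raises its `δ`-cardinality by at most `j`, so
`(m + j, n + j)`-expansiveness gives `(m, n)`-expansiveness on an infinite space; and
enlarging the sets only raises `δ`-cardinalities, so `(m, n)`-expansiveness gives
`(m', n)`-expansiveness for `m ≤ m'`. Apply the first with `j = n - n'`, then the second. -/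

variable {X : Type*} [MetricSpace X]

/-- The `k`-th iterate (`k ∈ ℤ`) of a homeomorphism, as a function. -/
noncomputable def hiter (f : X ≃ₜ X) (k : ℤ) : X → X := ⇑(f.toEquiv ^ k)

/-- A set is `δ`-separated if distinct points are at distance `> δ`. -/
def IsSeparated' (δ : ℝ) (B : Set X) : Prop :=
  ∀ x ∈ B, ∀ y ∈ B, x ≠ y → δ < dist x y

/-- The `δ`-cardinality of a set: sup of cardinalities of `δ`-separated subsets. -/
noncomputable def dCard (δ : ℝ) (A : Set X) : ℕ∞ :=
  ⨆ B ∈ {B : Set X | B ⊆ A ∧ IsSeparated' δ B}, B.encard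

/-- `(m,n)`-expansiveness with a given expansive constant `δ`. -/
def MNExpansiveWith (f : X ≃ₜ X) (m n : ℕ) (δ : ℝ) : Prop :=
  ∀ A : Set X, A.encard = m → ∃ k : ℤ, (n : ℕ∞) < dCard δ (hiter f k '' A)

/-- `(m,n)`-expansiveness. -/
def MNExpansive (f : X ≃ₜ X) (m n : ℕ) : Prop :=
  ∃ δ > 0, MNExpansiveWith f m n δ

lemma hiter_injective (f : X ≃ₜ X) (k : ℤ) : Function.Injective (hiter f k) :=
  (f.toEquiv ^ k).injective

lemma dCard_mono (δ : ℝ) {A B : Set X} (h : A ⊆ B) : dCard δ A ≤ dCard δ B :=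
  iSup₂_le fun S hS => le_iSup₂_of_le S ⟨hS.1.trans h, hS.2⟩ le_rfl

lemma dCard_le_dCard_add_encard_sdiff (δ : ℝ) (A B : Set X) :
    dCard δ B ≤ dCard δ A + (B \ A).encard := by
  refine iSup₂_le fun S ⟨hSB, hS⟩ => ?_
  have hA : (S ∩ A).encard ≤ dCard δ A :=
    le_iSup₂_of_le (S ∩ A) ⟨Set.inter_subset_right, fun x hx y hy => hS x hx.1 y hy.1⟩ le_rfl
  have hBA : (S \ A).encard ≤ (B \ A).encard := Set.encard_le_encard (Set.sdiff_subset_sdiff_left hSB)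
  calc S.encard = (S ∩ A ∪ S \ A).encard := by rw [Set.inter_union_sdiff]
    _ ≤ (S ∩ A).encard + (S \ A).encard := Set.encard_union_le _ _
    _ ≤ dCard δ A + (B \ A).encard := add_le_add hA hBA

lemma MNExpansiveWith.of_le_left {f : X ≃ₜ X} {m m' n : ℕ} {δ : ℝ}
    (hf : MNExpansiveWith f m n δ) (hm : m ≤ m') : MNExpansiveWith f m' n δ := by
  intro A hA
  obtain ⟨B, hBA, hB⟩ := Set.exists_subset_encard_eq (k := m) (hA ▸ Nat.cast_le.mpr hm)
  obtain ⟨k, hk⟩ := hf B hB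
  exact ⟨k, hk.trans_le (dCard_mono δ (Set.image_mono hBA))⟩

lemma MNExpansiveWith.of_add [Infinite X] {f : X ≃ₜ X} {m n j : ℕ} {δ : ℝ}
    (hf : MNExpansiveWith f (m + j) (n + j) δ) : MNExpansiveWith f m n δ := by
  intro A hA
  have hAfin : A.Finite := Set.finite_of_encard_eq_coe hA
  obtain ⟨B, hAB, -, hB⟩ := Set.exists_superset_subset_encard_eq (k := ((m + j : ℕ) : ℕ∞))
    (Set.subset_univ A) (by rw [hA]; exact Nat.cast_le.mpr (Nat.le_add_right m j))
    (by simp [Set.encard_univ])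
  have hBA : (B \ A).encard = j := by
    rw [Set.encard_sdiff hAB hAfin, hB, hA, ← ENat.natCast_sub, Nat.add_sub_cancel_left]
  obtain ⟨k, hk⟩ := hf B hB
  refine ⟨k, lt_of_not_ge fun hle => hk.not_ge ?_⟩
  calc dCard δ (hiter f k '' B)
      ≤ dCard δ (hiter f k '' A) + (hiter f k '' B \ hiter f k '' A).encard :=
        dCard_le_dCard_add_encard_sdiff δ _ _
    _ = dCard δ (hiter f k '' A) + j := by
        rw [← Set.image_sdiff (hiter_injective f k), (hiter_injective f k).encard_image, hBA]
    _ ≤ ((n + j : ℕ) : ℕ∞) := by push_cast; exact add_le_add_left hle _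

theorem stmt2_general [Infinite X] (f : X ≃ₜ X) (m n m' n' : ℕ)
    (h1 : n < m)
    (h5 : n' ≤ n) (h6 : m - n ≤ m' - n') (δ : ℝ)
    (hf : MNExpansiveWith f m n δ) : MNExpansiveWith f m' n' δ := by
  have hf' : MNExpansiveWith f (m - (n - n') + (n - n')) (n' + (n - n')) δ := by
    rwa [Nat.sub_add_cancel (by omega), Nat.add_sub_cancel' h5]
  exact hf'.of_add.of_le_left (by omega)

theorem stmt2 [CompactSpace X] [Infinite X] (f : X ≃ₜ X) (m n m' n' : ℕ)
    (h1 : n < m) (h2 : 1 ≤ n) (h3 : n' < m') (h4 : 1 ≤ n')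
    (h5 : n' ≤ n) (h6 : m - n ≤ m' - n') (δ : ℝ) (hδ : 0 < δ)
    (hf : MNExpansiveWith f m n δ) : MNExpansiveWith f m' n' δ :=
  stmt2_general f m n m' n' h1 h5 h6 δ hf
end

section
/- Let A, B ⊆ X be finite subsets of a metric space and δ > 0 with |A| = |A|_δ and |B|_δ = 1. Then for all ε > 0, |A ∪ B|_{δ+ε} ≤ |A|_ε + |B|_δ − |A ∩ B|. -/
variable {X : Type*} [MetricSpace X]

lemma le_dCard' {δ : ℝ} {A C : Set X} (hC : C ⊆ A) (hsep : IsSeparated' δ C) :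
    C.encard ≤ dCard δ A :=
  le_iSup₂_of_le C ⟨hC, hsep⟩ le_rfl

lemma dCard_le' {δ : ℝ} {A : Set X} {x : ℕ∞}
    (h : ∀ C, C ⊆ A → IsSeparated' δ C → C.encard ≤ x) : dCard δ A ≤ x :=
  iSup₂_le fun C hC => h C hC.1 hC.2

theorem stmt4 (A B : Set X) (hA : A.Finite) (hB : B.Finite) (δ : ℝ) (hδ : 0 < δ)
    (h1 : A.encard = dCard δ A) (h2 : dCard δ B = 1) :
    ∀ ε > 0, dCard (δ + ε) (A ∪ B) ≤ dCard ε A + dCard δ B - (A ∩ B).encard := by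
  intro ε hε
  -- A is δ-separated
  have hAsep : IsSeparated' δ A := by
    by_contra hcon
    simp only [IsSeparated', not_forall, not_lt] at hcon
    obtain ⟨x, hxA, y, hyA, hxy, hdxy⟩ := hcon
    have hbound : dCard δ A ≤ A.encard - 1 := by
      apply dCard_le'
      intro C hCA hCsep
      by_cases hxC : x ∈ C
      · have hyC : y ∉ C := fun hyC => absurd (hCsep x hxC y hyC hxy) (not_lt.2 hdxy)
        calc C.encard ≤ (A \ {y}).encard :=
              Set.encard_mono (fun z hz => ⟨hCA hz, fun hzy => hyC (by
                simp only [Set.mem_singleton_iff] at hzy; exact hzy ▸ hz)⟩)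
          _ = A.encard - 1 := Set.encard_diff_singleton_of_mem hyA
      · calc C.encard ≤ (A \ {x}).encard :=
              Set.encard_mono (fun z hz => ⟨hCA hz, fun hzx => hxC (by
                simp only [Set.mem_singleton_iff] at hzx; exact hzx ▸ hz)⟩)
          _ = A.encard - 1 := Set.encard_diff_singleton_of_mem hxA
    rw [← h1] at hbound
    have hlt : A.encard - 1 < A.encard := by
      have hne : A.encard ≠ ⊤ := hA.encard_lt_top.ne
      have h0 : A.encard ≠ 0 := by
        rw [Set.encard_ne_zero]; exact ⟨x, hxA⟩
      lift A.encard to ℕ using hne with n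
      have : n ≠ 0 := by exact_mod_cast h0
      exact_mod_cast Nat.sub_lt (Nat.pos_of_ne_zero this) one_pos
    exact absurd hbound (not_le.2 hlt)
  -- points of B are pairwise within δ
  have hBclose : ∀ x ∈ B, ∀ y ∈ B, dist x y ≤ δ := by
    intro x hx y hy
    by_contra hcon
    push_neg at hcon
    have hxy : x ≠ y := by
      rintro rfl; simp at hcon; linarith
    have : ({x, y} : Set X).encard ≤ dCard δ B := by
      apply le_dCard'
      · intro z hz; rcases hz with rfl | hz
        · exact hx
        · simp only [Set.mem_singleton_iff] at hz; exact hz ▸ hy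
      · intro a ha b hb hab
        rcases ha with rfl | ha <;> rcases hb with rfl | hb <;>
          simp_all [Set.mem_singleton_iff, dist_comm]
    rw [h2, Set.encard_pair hxy] at this
    exact absurd this (by norm_num)
  -- A ∩ B has at most one point
  have hABone : (A ∩ B).encard ≤ 1 := by
    rw [Set.encard_le_one_iff]
    intro a b ha hb
    by_contra hab
    exact absurd (hAsep a ha.1 b hb.1 hab) (not_lt.2 (hBclose a ha.2 b hb.2))
  rw [h2]
  rcases Set.encard_le_one_iff_eq.mp hABone with hemp | ⟨p, hp⟩
  · -- A ∩ B = ∅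
    rw [hemp, Set.encard_empty, tsub_zero]
    apply dCard_le'
    intro C hC hCsep
    have hsplit : C = (C ∩ A) ∪ (C \ A) := (Set.inter_union_diff C A).symm
    calc C.encard = ((C ∩ A) ∪ (C \ A)).encard := by rw [← hsplit]
      _ ≤ (C ∩ A).encard + (C \ A).encard := Set.encard_union_le _ _
      _ ≤ dCard ε A + 1 := by
          gcongr
          · apply le_dCard' Set.inter_subset_right
            intro x hx y hy hxy
            have := hCsep x hx.1 y hy.1 hxy
            linarith
          · rw [Set.encard_le_one_iff]
            intro a b ha hb
            by_contra hab
            have haB : a ∈ B := (hC ha.1).resolve_left ha.2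
            have hbB : b ∈ B := (hC hb.1).resolve_left hb.2
            have := hCsep a ha.1 b hb.1 hab
            have := hBclose a haB b hbB
            linarith
  · -- A ∩ B = {p}
    rw [hp, Set.encard_singleton]
    have hcancel : dCard ε A + 1 - 1 = dCard ε A := by
      cases h : dCard ε A with
      | top => rfl
      | coe n => exact_mod_cast rfl
    rw [hcancel]
    apply dCard_le'
    intro C hC hCsep
    have hpA : p ∈ A := (hp ▸ (Set.mem_singleton p) : p ∈ A ∩ B).1
    have hpB : p ∈ B := (hp ▸ (Set.mem_singleton p) : p ∈ A ∩ B).2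
    by_cases hCB : C ∩ B ⊆ {p}
    · -- C ⊆ A
      apply le_dCard'
      · intro x hx
        rcases hC hx with hxA | hxB
        · exact hxA
        · have : x ∈ ({p} : Set X) := hCB ⟨hx, hxB⟩
          simp only [Set.mem_singleton_iff] at this
          exact this ▸ hpA
      · intro x hx y hy hxy
        have := hCsep x hx y hy hxy
        linarith
    · -- there is b ∈ C ∩ B with b ≠ p
      obtain ⟨b, hbCB, hbp⟩ := Set.not_subset.mp hCB
      simp only [Set.mem_singleton_iff] at hbp
      have hbC : b ∈ C := hbCB.1
      have hbB : b ∈ B := hbCB.2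
      have hpC : p ∉ C := by
        intro hpC
        have := hCsep b hbC p hpC hbp
        have := hBclose b hbB p hpB
        linarith
      -- C ∩ B = {b}
      have hCBb : ∀ c ∈ C, c ∈ B → c = b := by
        intro c hcC hcB
        by_contra hcb
        have := hCsep c hcC b hbC hcb
        have := hBclose c hcB b hbB
        linarith
      set C' : Set X := insert p (C \ {b}) with hC'def
      have hC'A : C' ⊆ A := by
        intro x hx
        rcases hx with rfl | ⟨hxC, hxb⟩
        · exact hpA
        · simp only [Set.mem_singleton_iff] at hxb
          rcases hC hxC with hxA | hxB
          · exact hxA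
          · exact absurd (hCBb x hxC hxB) hxb
      have hC'sep : IsSeparated' ε C' := by
        intro x hx y hy hxy
        have key : ∀ z ∈ C, z ≠ b → ε < dist p z := by
          intro z hzC hzb
          have h1' := hCsep z hzC b hbC hzb
          have h2' := hBclose p hpB b hbB
          have h3' := dist_triangle z p b
          rw [dist_comm]
          linarith
        rcases hx with rfl | ⟨hxC, hxb⟩
        · rcases hy with rfl | ⟨hyC, hyb⟩
          · exact absurd rfl hxy
          · simp only [Set.mem_singleton_iff] at hyb
            exact key y hyC hyb
        · simp only [Set.mem_singleton_iff] at hxb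
          rcases hy with rfl | ⟨hyC, hyb⟩
          · rw [dist_comm]; exact key x hxC hxb
          · have := hCsep x hxC y hyC hxy
            linarith
      have hpnot : p ∉ C \ {b} := fun h => hpC h.1
      have hcard : C'.encard = C.encard := by
        rw [hC'def, Set.encard_insert_of_notMem hpnot,
          Set.encard_diff_singleton_add_one hbC]
      calc C.encard = C'.encard := hcard.symm
        _ ≤ dCard ε A := le_dCard' hC'A hC'sep
end

section
/- Let f : X → X be a homeomorphism of a compact metric space. If f is (m+l, n+1)-expansive, then f is (m,n)-expansive or (l,1)-expansive. -/
variable {X : Type*} [MetricSpace X]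

/-!
Suppose `f` is neither `(m,n)`- nor `(l,1)`-expansive, and let `δ` be an `(m+l,n+1)`-expansive
constant. Take an `m`-point set `A` all of whose iterates have `δ/2`-cardinality at most `n`.
If some `l`-point set whose iterates all have `δ`-cardinality at most one avoids `A`, adding it
to `A` gives `m + l` points whose iterates have `δ`-cardinality at most `n + 1`. Otherwise every
`l`-point set of orbit diameter at most `ε ≤ δ/4` meets `A`; since such sets exist for every
`ε > 0`, there are infinitely many points outside `A` whose orbits stay `δ/4`-close to the orbit
of a point of `A`. Adding `l` of them to `A` moves every `δ`-separated subset of an iterate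
injectively onto a `δ/2`-separated one of the iterate of `A`, so its cardinality stays at most `n`.
-/

open Filter Topology

section Separated

variable {δ ε : ℝ} {A B : Set X}

lemma IsSeparated'.anti (h : IsSeparated' δ B) (hεδ : ε ≤ δ) : IsSeparated' ε B :=
  fun x hx y hy hxy => hεδ.trans_lt (h x hx y hy hxy)

lemma IsSeparated'.subset (h : IsSeparated' δ B) (hAB : A ⊆ B) : IsSeparated' δ A :=
  fun x hx y hy hxy => h x (hAB hx) y (hAB hy) hxy

lemma Set.Finite.exists_pos_isSeparated' (hA : A.Finite) : ∃ r > 0, IsSeparated' r A := by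
  have hsmall : ∀ᶠ r in 𝓝[>] (0 : ℝ), 0 < r ∧ ∀ p ∈ A.offDiag, r < dist p.1 p.2 :=
    (eventually_mem_nhdsWithin (s := Set.Ioi 0)).and <| hA.offDiag.eventually_all.2 fun p hp =>
      eventually_nhdsWithin_of_eventually_nhds (eventually_lt_nhds (dist_pos.2 hp.2.2))
  obtain ⟨r, hr, hsep⟩ := hsmall.exists
  exact ⟨r, hr, fun x hx y hy hxy => hsep (x, y) ⟨hx, hy, hxy⟩⟩

lemma dCard_le_iff {c : ℕ∞} :
    dCard δ A ≤ c ↔ ∀ B ⊆ A, IsSeparated' δ B → B.encard ≤ c := by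
  simp [dCard]

lemma le_dCard (hBA : B ⊆ A) (hB : IsSeparated' δ B) : B.encard ≤ dCard δ A :=
  dCard_le_iff.1 le_rfl B hBA hB

lemma dCard_anti (hεδ : ε ≤ δ) (A : Set X) : dCard δ A ≤ dCard ε A :=
  dCard_le_iff.2 fun _ hBA hB => le_dCard hBA (hB.anti hεδ)

lemma dCard_union_le (A B : Set X) : dCard δ (A ∪ B) ≤ dCard δ A + dCard δ B := by
  refine dCard_le_iff.2 fun S hS hSsep => ?_
  calc S.encard = (S ∩ A ∪ S \ A).encard := by rw [Set.inter_union_sdiff]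
    _ ≤ (S ∩ A).encard + (S \ A).encard := Set.encard_union_le _ _
    _ ≤ dCard δ A + dCard δ B := by
      gcongr
      · exact le_dCard Set.inter_subset_right (hSsep.subset Set.inter_subset_left)
      · exact le_dCard (fun x hx => (hS hx.1).resolve_left hx.2) (hSsep.subset Set.sdiff_subset)

lemma dist_le_of_dCard_le_one (hε : 0 ≤ ε) (h : dCard ε A ≤ 1) {x y : X} (hx : x ∈ A)
    (hy : y ∈ A) : dist x y ≤ ε := by
  by_contra! hxy
  have hne : x ≠ y := by rintro rfl; rw [dist_self] at hxy; linarith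
  have hpair : IsSeparated' ε {x, y} := by
    rintro a (rfl | rfl) b (rfl | rfl) hab <;> simp_all [dist_comm]
  have := (le_dCard (Set.pair_subset hx hy) hpair).trans h
  rw [Set.encard_pair hne] at this
  norm_num at this

lemma dCard_le_of_forall_exists_dist_le {U V : Set X} {β γ : ℝ} (hγ : 0 ≤ γ)
    (hδ : γ + 2 * β ≤ δ) (hV : ∀ v ∈ V, ∃ u ∈ U, dist v u ≤ β) :
    dCard δ V ≤ dCard γ U := by
  refine dCard_le_iff.2 fun S hSV hS => ?_
  choose! ψ hψU hψ using fun s (hs : s ∈ S) => hV s (hSV hs)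
  have havoid : ∀ a ∈ S, ∀ b ∈ S, a ≠ b → γ < dist (ψ a) (ψ b) := by
    intro a ha b hb hab
    have := hS a ha b hb hab
    have := dist_triangle4 a (ψ a) (ψ b) b
    have := hψ a ha
    have := hψ b hb
    rw [dist_comm b] at this
    linarith
  have hinj : Set.InjOn ψ S := fun a ha b hb hψab => by
    by_contra hab
    have := havoid a ha b hb hab
    rw [hψab, dist_self] at this
    linarith
  rw [← hinj.encard_image]
  refine le_dCard (Set.image_subset_iff.2 hψU) ?_
  rintro _ ⟨a, ha, rfl⟩ _ ⟨b, hb, rfl⟩ hne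
  exact havoid a ha b hb (ne_of_apply_ne ψ hne)

end Separated

section Orbits

variable {f : X ≃ₜ X} {δ ε β : ℝ} {c d : ℕ∞} {A B : Set X}

def OrbitDCardLE (f : X ≃ₜ X) (δ : ℝ) (c : ℕ∞) (A : Set X) : Prop :=
  ∀ k : ℤ, dCard δ (hiter f k '' A) ≤ c

def Shadows (f : X ≃ₜ X) (β : ℝ) (y x : X) : Prop :=
  ∀ k : ℤ, dist (hiter f k y) (hiter f k x) ≤ β

@[simp]
lemma hiter_zero_apply (f : X ≃ₜ X) (x : X) : hiter f 0 x = x := by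
  simp [hiter]

lemma mnExpansiveWith_iff {m n : ℕ} :
    MNExpansiveWith f m n δ ↔ ∀ A : Set X, A.encard = m → ¬ OrbitDCardLE f δ n A := by
  simp [MNExpansiveWith, OrbitDCardLE]

lemma exists_orbitDCardLE_of_not_mnExpansive {m n : ℕ} (h : ¬ MNExpansive f m n)
    (hδ : 0 < δ) : ∃ A : Set X, A.encard = m ∧ OrbitDCardLE f δ n A := by
  have hδf : ¬ MNExpansiveWith f m n δ := fun hδf => h ⟨δ, hδ, hδf⟩
  simpa [mnExpansiveWith_iff] using hδf

lemma OrbitDCardLE.mono (h : OrbitDCardLE f δ c A) (hcd : c ≤ d) : OrbitDCardLE f δ d A :=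
  fun k => (h k).trans hcd

lemma OrbitDCardLE.anti (h : OrbitDCardLE f ε c A) (hεδ : ε ≤ δ) : OrbitDCardLE f δ c A :=
  fun k => (dCard_anti hεδ _).trans (h k)

lemma OrbitDCardLE.union (hA : OrbitDCardLE f δ c A) (hB : OrbitDCardLE f δ d B) :
    OrbitDCardLE f δ (c + d) (A ∪ B) := fun k => by
  rw [Set.image_union]
  exact (dCard_union_le _ _).trans (add_le_add (hA k) (hB k))

lemma OrbitDCardLE.shadows (h : OrbitDCardLE f ε 1 B) (hε : 0 ≤ ε) {x y : X} (hx : x ∈ B)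
    (hy : y ∈ B) : Shadows f ε y x :=
  fun k => dist_le_of_dCard_le_one hε (h k) (Set.mem_image_of_mem _ hy)
    (Set.mem_image_of_mem _ hx)

lemma OrbitDCardLE.union_of_shadows {γ : ℝ} {T : Set X} (hA : OrbitDCardLE f γ c A)
    (hγ : 0 ≤ γ) (hβ : 0 ≤ β) (hδ : γ + 2 * β ≤ δ)
    (hT : ∀ t ∈ T, ∃ a ∈ A, Shadows f β t a) : OrbitDCardLE f δ c (A ∪ T) := by
  refine fun k => (dCard_le_of_forall_exists_dist_le hγ hδ ?_).trans (hA k)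
  rintro _ ⟨y, hy | hy, rfl⟩
  · exact ⟨_, Set.mem_image_of_mem _ hy, by simpa using hβ⟩
  · obtain ⟨a, ha, hya⟩ := hT y hy
    exact ⟨_, Set.mem_image_of_mem _ ha, hya k⟩

lemma infinite_setOf_shadows {l : ℕ} (hl : 2 ≤ l) (hf : ¬ MNExpansive f l 1) (hA : A.Finite)
    (hβ : 0 < β)
    (hmeet : ∀ B : Set X, B.encard = l → OrbitDCardLE f β 1 B → (A ∩ B).Nonempty) :
    {y | y ∉ A ∧ ∃ a ∈ A, Shadows f β y a}.Infinite := by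
  intro hP
  obtain ⟨r, hr, hsep⟩ := (hP.union hA).exists_pos_isSeparated'
  obtain ⟨B, hB, hBorb⟩ := exists_orbitDCardLE_of_not_mnExpansive hf (lt_min hβ hr)
  have hBβ := hBorb.anti (min_le_left β r)
  obtain ⟨x, hxA, hxB⟩ := hmeet B hB hBβ
  obtain ⟨u, hu, v, hv, huv⟩ : B.Nontrivial := by
    rw [← Set.one_lt_encard_iff_nontrivial, hB]
    exact_mod_cast hl
  obtain ⟨y, hyB, hy⟩ : ∃ y ∈ B, y ∉ _ ∪ A := by
    by_contra! hBsub
    have := hsep u (hBsub u hu) v (hBsub v hv) huv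
    have := hBorb.shadows (lt_min hβ hr).le hv hu 0
    simp only [hiter_zero_apply] at this
    linarith [min_le_right β r]
  exact hy (Or.inl ⟨fun hyA => hy (Or.inr hyA), x, hxA, hBβ.shadows hβ.le hxB hyB⟩)

lemma exists_disjoint_orbitDCardLE_union {l : ℕ} {n : ℕ∞} (hl : 2 ≤ l)
    (hf : ¬ MNExpansive f l 1) (hA : A.Finite) (hAorb : OrbitDCardLE f (δ / 2) n A)
    (hδ : 0 < δ) :
    ∃ B : Set X, B.encard = l ∧ Disjoint A B ∧ OrbitDCardLE f δ (n + 1) (A ∪ B) := by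
  by_cases havoid : ∃ B : Set X, B.encard = l ∧ Disjoint A B ∧ OrbitDCardLE f δ 1 B
  · obtain ⟨B, hB, hAB, hBorb⟩ := havoid
    exact ⟨B, hB, hAB, (hAorb.anti (by linarith)).union hBorb⟩
  have hmeet (B : Set X) (hB : B.encard = l) (hBorb : OrbitDCardLE f (δ / 4) 1 B) :
      (A ∩ B).Nonempty := by
    by_contra hAB
    exact havoid ⟨B, hB, Set.disjoint_iff_inter_eq_empty.2 (Set.not_nonempty_iff_eq_empty.1 hAB),
      hBorb.anti (by linarith)⟩
  have hshadows := infinite_setOf_shadows hl hf hA (by positivity) hmeet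
  obtain ⟨T, hTsub, hT⟩ :=
    Set.exists_subset_encard_eq (hshadows.encard_eq ▸ le_top (a := (l : ℕ∞)))
  refine ⟨T, hT, Set.disjoint_right.2 fun t ht => (hTsub ht).1, ?_⟩
  exact (hAorb.union_of_shadows (by positivity) (by positivity) (by linarith)
    fun t ht => (hTsub ht).2).mono le_self_add

end Orbits

theorem stmt5_general (f : X ≃ₜ X) (m n l : ℕ) (h3 : 2 ≤ l) (hf : MNExpansive f (m + l) (n + 1)) :
    MNExpansive f m n ∨ MNExpansive f l 1 := by
  by_contra! hnot
  obtain ⟨δ, hδ, hfδ⟩ := hf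
  obtain ⟨A, hA, hAorb⟩ := exists_orbitDCardLE_of_not_mnExpansive hnot.1 (half_pos hδ)
  have hAfin : A.Finite := Set.finite_of_encard_eq_coe hA
  obtain ⟨B, hB, hAB, hABorb⟩ := exists_disjoint_orbitDCardLE_union h3 hnot.2 hAfin hAorb hδ
  refine mnExpansiveWith_iff.1 hfδ (A ∪ B) ?_ (by exact_mod_cast hABorb)
  rw [Set.encard_union_eq hAB, hA, hB, Nat.cast_add]

theorem stmt5 [CompactSpace X] (f : X ≃ₜ X) (m n l : ℕ) (h1 : n < m) (h2 : 1 ≤ n)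
    (h3 : 2 ≤ l) (hf : MNExpansive f (m + l) (n + 1)) :
    MNExpansive f m n ∨ MNExpansive f l 1 :=
  stmt5_general f m n l h3 hf
end

section
/- Let f : X → X be a homeomorphism of an infinite compact metric space. Then for every δ > 0 there exist distinct points x₁, x₂ ∈ X with dist(f^k(x₁), f^k(x₂)) < δ for all k ≥ 0, and distinct points y₁, y₂ ∈ X with dist(f^k(y₁), f^k(y₂)) < δ for all k ≤ 0. -/
variable {X : Type*} [MetricSpace X]

/-! If `g` were positively expansive with constant `c` on an infinite compact space, compactness
would make the expansion uniform: points whose first `N` iterates stay `c`-close are `ε`-close.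
Hence the backward iterates `g^(-j)` form a uniformly equicontinuous family, and by Arzelà–Ascoli
some `g^(-k)` with `k ≥ n` is uniformly `c / 3`-close to the identity. Taking distinct `x, y` so
close that their backward orbits stay `c / 3`-close, the estimates `g^n x ≈ g^(-(k-n)) x` and
`g^n y ≈ g^(-(k-n)) y` give `dist (g^n x) (g^n y) < c` for every `n`, a contradiction.
Apply this to `f` and to `f⁻¹`. -/

open Set Function
open scoped BoundedContinuousFunction

def IsPositivelyExpansive (g : X → X) (c : ℝ) : Prop :=
  ∀ x y, x ≠ y → ∃ n : ℕ, c < dist (g^[n] x) (g^[n] y)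

section PositivelyExpansive

variable [CompactSpace X]

theorem Continuous.exists_forall_iterate_dist_lt {g : X → X} (hg : Continuous g) (N : ℕ)
    {c : ℝ} (hc : 0 < c) :
    ∃ ρ > 0, ∀ x y, dist x y < ρ → ∀ k ≤ N, dist (g^[k] x) (g^[k] y) < c := by
  have : UniformEquicontinuous fun k : Fin (N + 1) => g^[k] :=
    uniformEquicontinuous_finite.2 fun k =>
      CompactSpace.uniformContinuous_of_continuous (hg.iterate k)
  obtain ⟨ρ, hρ, h⟩ := Metric.uniformEquicontinuous_iff.1 this c hc
  exact ⟨ρ, hρ, fun x y hxy k hk => h x y hxy ⟨k, Nat.lt_succ_of_le hk⟩⟩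

theorem IsPositivelyExpansive.exists_dist_lt_of_forall_iterate_dist_le {g : X → X} {c : ℝ}
    (hexp : IsPositivelyExpansive g c) (hg : Continuous g) {ε : ℝ} (hε : 0 < ε) :
    ∃ N : ℕ, ∀ x y, (∀ k ≤ N, dist (g^[k] x) (g^[k] y) ≤ c) → dist x y < ε := by
  by_contra! hbad
  let K : ℕ → Set (X × X) := fun N =>
    {p | ε ≤ dist p.1 p.2} ∩ ⋂ k ∈ Iic N, {p | dist (g^[k] p.1) (g^[k] p.2) ≤ c}
  have hK_closed (N : ℕ) : IsClosed (K N) := by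
    refine (isClosed_le continuous_const continuous_dist).inter (isClosed_biInter fun k _ => ?_)
    exact isClosed_le
      (((hg.iterate k).comp continuous_fst).dist ((hg.iterate k).comp continuous_snd))
      continuous_const
  obtain ⟨⟨x, y⟩, hxy⟩ := IsCompact.nonempty_iInter_of_sequence_nonempty_isCompact_isClosed K
    (fun N => inter_subset_inter_right _ (biInter_subset_biInter_left (Iic_subset_Iic.2 N.le_succ)))
    (fun N => let ⟨x, y, h⟩ := hbad N; ⟨(x, y), h.2, mem_iInter₂.2 h.1⟩)
    (hK_closed 0).isCompact hK_closed
  rw [mem_iInter] at hxy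
  have hne : x ≠ y := by
    rintro rfl
    simpa using hε.trans_le (hxy 0).1
  obtain ⟨n, hn⟩ := hexp x y hne
  exact hn.not_ge (mem_iInter₂.1 (hxy n).2 n self_mem_Iic)

theorem IsPositivelyExpansive.uniformEquicontinuous_iterate_symm {g : X ≃ₜ X} {c : ℝ}
    (hexp : IsPositivelyExpansive g c) (hc : 0 < c) :
    UniformEquicontinuous fun j : ℕ => (⇑g.symm)^[j] := by
  rw [Metric.uniformEquicontinuous_iff]
  intro ε hε
  obtain ⟨η, hη, hsymm⟩ := Metric.uniformContinuous_iff.1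
    (CompactSpace.uniformContinuous_of_continuous g.symm.continuous) c hc
  obtain ⟨N, hN⟩ := hexp.exists_dist_lt_of_forall_iterate_dist_le g.continuous (lt_min hε hη)
  obtain ⟨ρ, hρ, hwindow⟩ := g.continuous.exists_forall_iterate_dist_lt N hc
  have hsymm_window (x y : X) (h : ∀ k ≤ N, dist (g^[k] x) (g^[k] y) ≤ c) :
      ∀ k ≤ N, dist (g^[k] (g.symm x)) (g^[k] (g.symm y)) ≤ c
    -- `x, y` are `η`-close by the choice of `N`, which controls the new time-`0` distance
    | 0, _ => (hsymm ((hN x y h).trans_le (min_le_right _ _))).le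
    | k + 1, hk => by simpa only [iterate_succ_apply, g.apply_symm_apply] using h k (by omega)
  refine ⟨ρ, hρ, fun x y hxy j => (hN _ _ ?_).trans_le (min_le_left _ _)⟩
  induction j with
  | zero => exact fun k hk => (hwindow x y hxy k hk).le
  | succ j ih => simpa only [iterate_succ_apply'] using hsymm_window _ _ ih

theorem UniformEquicontinuous.exists_iterate_dist_lt {h : X → X}
    (hh : UniformEquicontinuous fun j : ℕ => h^[j]) {ε : ℝ} (hε : 0 < ε) (N : ℕ) :
    ∃ m n, m + N ≤ n ∧ ∀ w, dist (h^[m] w) (h^[n] w) < ε := by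
  let F : ℕ → X →ᵇ X := fun j =>
    .mkOfCompact ⟨h^[j], (hh.uniformContinuous j).continuous⟩
  have hF : Equicontinuous ((↑) : range F → X → X) := by
    convert hh.equicontinuous.comp (rangeSplitting F) using 1
    ext f : 1
    exact congrArg DFunLike.coe (apply_rangeSplitting F f).symm
  obtain ⟨L, -, φ, hφ, hL⟩ := (BoundedContinuousFunction.arzela_ascoli univ isCompact_univ
    (range F) (fun _ _ _ => mem_univ _) hF).tendsto_subseq
    (fun j => subset_closure (mem_range_self j))
  obtain ⟨M, hM⟩ := Metric.cauchySeq_iff'.1 hL.cauchySeq ε hε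
  refine ⟨φ M, φ (N + M), (add_comm _ _).trans_le (hφ.add_le_nat N M), fun w => ?_⟩
  calc dist (h^[φ M] w) (h^[φ (N + M)] w) = dist (F (φ (N + M)) w) (F (φ M) w) := dist_comm _ _
    _ ≤ dist (F (φ (N + M))) (F (φ M)) := BoundedContinuousFunction.dist_coe_le_dist w
    _ < ε := hM _ (Nat.le_add_left M N)

theorem Homeomorph.exists_iterate_dist_lt_of_uniformEquicontinuous {g : X ≃ₜ X}
    (hg : UniformEquicontinuous fun j : ℕ => (⇑g)^[j]) {ε : ℝ} (hε : 0 < ε) (N : ℕ) :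
    ∃ k ≥ N, ∀ u, dist u (g^[k] u) < ε := by
  obtain ⟨m, n, hmn, hclose⟩ := hg.exists_iterate_dist_lt hε N
  refine ⟨n - m, by omega, fun u => ?_⟩
  have hret : (⇑g)^[m] ((⇑g.symm)^[m] u) = u := (LeftInverse.iterate g.apply_symm_apply m) u
  have := hclose ((⇑g.symm)^[m] u)
  rwa [hret, show n = (n - m) + m by omega, iterate_add_apply, hret] at this

theorem exists_ne_dist_lt_of_infinite [Infinite X] {ρ : ℝ} (hρ : 0 < ρ) :
    ∃ x y : X, x ≠ y ∧ dist x y < ρ := by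
  obtain ⟨x, hx⟩ := (infinite_univ (α := X)).exists_accPt_principal
  obtain ⟨y, ⟨hy, -⟩, hne⟩ := accPt_iff_nhds.1 hx _ (Metric.ball_mem_nhds x hρ)
  exact ⟨y, x, hne, hy⟩

theorem IsPositivelyExpansive.finite {g : X ≃ₜ X} {c : ℝ} (hexp : IsPositivelyExpansive g c)
    (hc : 0 < c) : Finite X := by
  by_contra!
  have hequi := hexp.uniformEquicontinuous_iterate_symm hc
  obtain ⟨ρ, hρ, hback⟩ := Metric.uniformEquicontinuous_iff.1 hequi (c / 3) (by positivity)
  obtain ⟨x, y, hxy, hdist⟩ := exists_ne_dist_lt_of_infinite (X := X) hρ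
  obtain ⟨n, hn⟩ := hexp x y hxy
  obtain ⟨k, hkn, hk⟩ :=
    g.symm.exists_iterate_dist_lt_of_uniformEquicontinuous hequi (by positivity : 0 < c / 3) n
  have hshift (z : X) : dist (g^[n] z) ((⇑g.symm)^[k - n] z) < c / 3 := by
    have hret : (⇑g.symm)^[n] ((⇑g)^[n] z) = z := (LeftInverse.iterate g.symm_apply_apply n) z
    have := hk ((⇑g)^[n] z)
    rwa [show k = (k - n) + n by omega, iterate_add_apply, hret] at this
  have : dist (g^[n] x) (g^[n] y) < c / 3 + c / 3 + c / 3 :=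
    (dist_triangle4 _ ((⇑g.symm)^[k - n] x) ((⇑g.symm)^[k - n] y) _).trans_lt <|
      add_lt_add (add_lt_add (hshift x) (hback x y hdist _))
        ((dist_comm _ _).trans_lt (hshift y))
  exact hn.not_gt (by linarith)

theorem Homeomorph.exists_ne_forall_iterate_dist_le [Infinite X] (g : X ≃ₜ X) {c : ℝ}
    (hc : 0 < c) : ∃ x y : X, x ≠ y ∧ ∀ n : ℕ, dist (g^[n] x) (g^[n] y) ≤ c := by
  by_contra! h
  have := IsPositivelyExpansive.finite (g := g) h hc
  exact not_finite X

end PositivelyExpansive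

theorem hiter_natCast (f : X ≃ₜ X) (n : ℕ) : hiter f n = (⇑f)^[n] := by
  rw [hiter, zpow_natCast, ← Equiv.Perm.iterate_eq_pow]
  rfl

theorem hiter_neg_natCast (f : X ≃ₜ X) (n : ℕ) : hiter f (-n) = (⇑f.symm)^[n] := by
  rw [hiter, zpow_neg, zpow_natCast, ← inv_pow, Equiv.Perm.inv_def, ← Equiv.Perm.iterate_eq_pow]
  rfl

theorem stmt11 [CompactSpace X] [Infinite X] (f : X ≃ₜ X) :
    ∀ δ > 0,
      (∃ x₁ x₂ : X, x₁ ≠ x₂ ∧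
        ∀ k : ℤ, 0 ≤ k → dist (hiter f k x₁) (hiter f k x₂) < δ) ∧
      (∃ y₁ y₂ : X, y₁ ≠ y₂ ∧
        ∀ k : ℤ, k ≤ 0 → dist (hiter f k y₁) (hiter f k y₂) < δ) := by
  intro δ hδ
  obtain ⟨x₁, x₂, hx, hx_close⟩ := f.exists_ne_forall_iterate_dist_le (half_pos hδ)
  obtain ⟨y₁, y₂, hy, hy_close⟩ := f.symm.exists_ne_forall_iterate_dist_le (half_pos hδ)
  refine ⟨⟨x₁, x₂, hx, fun k hk => ?_⟩, ⟨y₁, y₂, hy, fun k hk => ?_⟩⟩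
  · lift k to ℕ using hk
    rw [hiter_natCast]
    exact (hx_close k).trans_lt (half_lt_self hδ)
  · obtain ⟨n, rfl⟩ := Int.exists_eq_neg_ofNat hk
    rw [hiter_neg_natCast]
    exact (hy_close n).trans_lt (half_lt_self hδ)
end

section
/- There exists a compact metric space X and a homeomorphism f : X → X that is (4,2)-expansive but not (3,2)-expansive. -/
/-!
The space is the countable compact set `{0, 1, 2} ∪ {x_k} ∪ {1 + x_k} ⊆ ℝ` with
`x_k = 4^k / (4^k + 1)`, and `f` shifts the index `k` by one; it is the restriction of a
continuous map of `ℝ` built from the Möbius map `s ↦ 4s / (1 + 3s)`, which sends `x_k`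
to `x_(k+1)`.

Cut `[0, 2]` into five cells: `cell p = n` means that `p` lies within `1/5` of `n/2`, so points in
different cells are `1/10` apart. The odd cells are the single points `x_0` and `1 + x_0`, one on
each non-fixed orbit. Given four points, either two of them lie on the same non-fixed orbit, or
two are fixed and one is not; in both cases moving a suitable point into its odd cell puts three
of them into three different cells. On the other hand, in `{x_M, 1 + x_N, 1}` with `M ≫ 0 ≫ N`,
at every time either the first point (forwards) or the second (backwards) is `δ`-close to the
fixed point `1`.
-/

variable {X : Type*} [MetricSpace X]

open Filter Topology Set

lemma encard_le_dCard {δ : ℝ} {A B : Set X} (hBA : B ⊆ A) (hB : IsSeparated' δ B) :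
    B.encard ≤ dCard δ A :=
  le_iSup₂ (f := fun B (_ : B ∈ {B : Set X | B ⊆ A ∧ IsSeparated' δ B}) => B.encard)
    B ⟨hBA, hB⟩

lemma encard_pair_le {α : Type*} (u v : α) : ({u, v} : Set α).encard ≤ 2 :=
  (encard_insert_le _ _).trans (by rw [encard_singleton]; rfl)

lemma exists_mem_ne_ne_of_two_lt_encard {α : Type*} {A : Set α} (hA : 2 < A.encard) (u v : α) :
    ∃ r ∈ A, r ≠ u ∧ r ≠ v := by
  by_contra! h
  have hA' : A ⊆ {u, v} := fun r hr => (em (r = u)).imp id (h r hr)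
  exact ((encard_le_encard hA').trans (encard_pair_le u v)).not_gt hA

lemma encard_inter_range_le_one {α ι : Type*} [LinearOrder ι] {A : Set α} {f : ι → α}
    (h : ¬∃ i j, i < j ∧ f i ∈ A ∧ f j ∈ A) : (A ∩ range f).encard ≤ 1 := by
  refine encard_le_one_iff.2 ?_
  rintro _ _ ⟨hi, i, rfl⟩ ⟨hj, j, rfl⟩
  rcases lt_trichotomy i j with hij | rfl | hji
  exacts [absurd ⟨i, j, hij, hi, hj⟩ h, rfl, absurd ⟨j, i, hji, hj, hi⟩ h]

lemma two_lt_dCard_of_dist {δ : ℝ} (hδ : 0 ≤ δ) {A : Set X} {p q r : X}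
    (hp : p ∈ A) (hq : q ∈ A) (hr : r ∈ A)
    (hpq : δ < dist p q) (hpr : δ < dist p r) (hqr : δ < dist q r) : 2 < dCard δ A := by
  have ne_of_lt_dist {u v : X} (h : δ < dist u v) : u ≠ v := by
    rintro rfl; rw [dist_self] at h; linarith
  have hsep : IsSeparated' δ {p, q, r} := by
    rintro u (rfl | rfl | rfl) v (rfl | rfl | rfl) huv <;>
      first | exact absurd rfl huv | assumption | (rw [dist_comm]; assumption)
  have hcard : ({p, q, r} : Set X).encard = 3 :=
    encard_eq_three.2 ⟨p, q, r, ne_of_lt_dist hpq, ne_of_lt_dist hpr, ne_of_lt_dist hqr, rfl⟩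
  calc (2 : ℕ∞) < 3 := by norm_num
    _ = ({p, q, r} : Set X).encard := hcard.symm
    _ ≤ dCard δ A := encard_le_dCard (by rintro u (rfl | rfl | rfl) <;> assumption) hsep

lemma dCard_le_two_of_dist_le {δ : ℝ} {p q r : X} (hpq : dist p q ≤ δ) :
    dCard δ {p, q, r} ≤ 2 := by
  refine iSup₂_le fun B ⟨hBA, hB⟩ => ?_
  have hB' : B ⊆ {q, r} ∨ B ⊆ {p, r} := by
    by_cases hp : p ∈ B
    · refine Or.inr fun u hu => ?_
      rcases hBA hu with rfl | rfl | rfl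
      · exact Or.inl rfl
      · by_contra hne
        exact (hB p hp u hu (fun h => hne (Or.inl h.symm))).not_ge hpq
      · exact Or.inr rfl
    · refine Or.inl fun u hu => ?_
      rcases hBA hu with rfl | rfl | rfl
      exacts [absurd hu hp, Or.inl rfl, Or.inr rfl]
  rcases hB' with h | h <;> exact (encard_le_encard h).trans (encard_pair_le _ _)

lemma isCompact_insert_insert_range_of_tendsto {Y : Type*} [TopologicalSpace Y] {u : ℤ → Y}
    {a b : Y} (ha : Tendsto u atBot (𝓝 a)) (hb : Tendsto u atTop (𝓝 b)) :
    IsCompact (insert a (insert b (range u))) := by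
  have hpos : Tendsto (fun n : ℕ => u n) atTop (𝓝 b) := hb.comp tendsto_natCast_atTop_atTop
  have hneg : Tendsto (fun n : ℕ => u (-n)) atTop (𝓝 a) :=
    ha.comp (tendsto_neg_atTop_atBot.comp tendsto_natCast_atTop_atTop)
  convert hneg.isCompact_insert_range.union hpos.isCompact_insert_range using 1
  ext v
  simp only [mem_insert_iff, mem_range, mem_union]
  constructor
  · rintro (rfl | rfl | ⟨k, rfl⟩)
    · exact Or.inl (Or.inl rfl)
    · exact Or.inr (Or.inl rfl)
    · rcases Int.eq_nat_or_neg k with ⟨n, rfl | rfl⟩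
      exacts [Or.inr (Or.inr ⟨n, rfl⟩), Or.inl (Or.inr ⟨n, rfl⟩)]
  · rintro ((rfl | ⟨n, rfl⟩) | (rfl | ⟨n, rfl⟩)) <;> simp

noncomputable def orbitPos (k : ℤ) : ℝ := 4 ^ k / (4 ^ k + 1)

lemma orbitPos_eq_one_sub (k : ℤ) : orbitPos k = 1 - (4 ^ k + 1)⁻¹ := by
  have : (0 : ℝ) < 4 ^ k := by positivity
  rw [orbitPos]; field_simp; ring

lemma orbitPos_pos (k : ℤ) : 0 < orbitPos k := by unfold orbitPos; positivity

lemma orbitPos_lt_one (k : ℤ) : orbitPos k < 1 := by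
  rw [orbitPos_eq_one_sub]; have : (0 : ℝ) < (4 ^ k + 1)⁻¹ := by positivity
  linarith

lemma orbitPos_ne_one_add (i j : ℤ) : orbitPos i ≠ 1 + orbitPos j := by
  linarith [orbitPos_lt_one i, orbitPos_pos j]

lemma strictMono_orbitPos : StrictMono orbitPos := by
  intro k l hkl
  have h4 : (4 : ℝ) ^ k < 4 ^ l := zpow_lt_zpow_right₀ (by norm_num) hkl
  have : (0 : ℝ) < 4 ^ k := by positivity
  rw [orbitPos_eq_one_sub, orbitPos_eq_one_sub, sub_lt_sub_iff_left]
  exact inv_strictAnti₀ (by positivity) (by linarith)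

lemma orbitPos_neg_one : orbitPos (-1) = 1 / 5 := by norm_num [orbitPos]
lemma orbitPos_zero : orbitPos 0 = 1 / 2 := by norm_num [orbitPos]
lemma orbitPos_one : orbitPos 1 = 4 / 5 := by norm_num [orbitPos]

lemma tendsto_four_zpow_atTop : Tendsto (fun k : ℤ => (4 : ℝ) ^ k) atTop atTop := by
  simpa only [Function.comp_def, id, Real.rpow_intCast] using
    (tendsto_rpow_atTop_of_base_gt_one 4 (by norm_num)).comp
      (tendsto_intCast_atTop_iff.2 tendsto_id)

lemma tendsto_four_zpow_atBot : Tendsto (fun k : ℤ => (4 : ℝ) ^ k) atBot (𝓝 0) := by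
  simpa only [Function.comp_def, id, Real.rpow_intCast] using
    (tendsto_rpow_atBot_of_base_gt_one 4 (by norm_num)).comp
      (tendsto_intCast_atBot_iff.2 tendsto_id)

lemma tendsto_orbitPos_atTop : Tendsto orbitPos atTop (𝓝 1) := by
  have h := (tendsto_inv_atTop_zero.comp
    (tendsto_atTop_add_const_right _ 1 tendsto_four_zpow_atTop)).const_sub (1 : ℝ)
  rw [sub_zero] at h
  rwa [show orbitPos = fun k => 1 - (4 ^ k + 1)⁻¹ from funext orbitPos_eq_one_sub]

lemma tendsto_orbitPos_atBot : Tendsto orbitPos atBot (𝓝 0) := by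
  have h := tendsto_four_zpow_atBot.div (tendsto_four_zpow_atBot.add_const 1) (by norm_num)
  rwa [zero_div] at h

-- The absolute value only makes `orbitStep` continuous on `ℝ`; it is evaluated on `[0, 1]`.
noncomputable def orbitStep (s : ℝ) : ℝ := 4 * s / (1 + 3 * |s|)

@[fun_prop]
lemma continuous_orbitStep : Continuous orbitStep :=
  (continuous_const.mul continuous_id).div (by fun_prop) fun s => by positivity

lemma orbitStep_zero : orbitStep 0 = 0 := by simp [orbitStep]
lemma orbitStep_one : orbitStep 1 = 1 := by norm_num [orbitStep]

lemma orbitStep_orbitPos (k : ℤ) : orbitStep (orbitPos k) = orbitPos (k + 1) := by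
  have : (0 : ℝ) < 4 ^ k := by positivity
  rw [orbitStep, abs_of_pos (orbitPos_pos k), orbitPos, orbitPos, zpow_add_one₀ (by norm_num)]
  field_simp
  ring

-- `orbitStep` on `[0, 1]` and `1 + orbitStep (t - 1)` on `[1, 2]`.
noncomputable def realShift (t : ℝ) : ℝ := orbitStep (min t 1) + orbitStep (max (t - 1) 0)

lemma continuous_realShift : Continuous realShift := by
  unfold realShift
  fun_prop

inductive FiveOrbits : Type
  | a | b | c
  | x (i : ℤ)
  | y (i : ℤ)

namespace FiveOrbits

noncomputable def pos : FiveOrbits → ℝ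
  | a => 0
  | b => 1
  | c => 2
  | x i => orbitPos i
  | y i => 1 + orbitPos i

lemma pos_injective : Function.Injective pos := by
  intro p q hpq
  cases p <;> cases q <;> simp only [pos, x.injEq, y.injEq] at hpq ⊢ <;>
    first
      | rfl
      | (norm_num at hpq; done)
      | exact strictMono_orbitPos.injective (by linarith)
      | exact absurd hpq (orbitPos_ne_one_add _ _)
      | exact absurd hpq.symm (orbitPos_ne_one_add _ _)
      | (exfalso; linarith [orbitPos_pos ‹_›, orbitPos_lt_one ‹_›])

noncomputable instance : MetricSpace FiveOrbits :=
  MetricSpace.induced pos pos_injective inferInstance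

lemma dist_eq (p q : FiveOrbits) : dist p q = |pos p - pos q| := Real.dist_eq _ _

lemma isometry_pos : Isometry pos := Isometry.of_dist_eq fun _ _ => rfl

lemma tendsto_nhds_iff {α : Type*} {l : Filter α} {u : α → FiveOrbits} {p : FiveOrbits} :
    Tendsto u l (𝓝 p) ↔ Tendsto (pos ∘ u) l (𝓝 (pos p)) :=
  isometry_pos.isEmbedding.tendsto_nhds_iff

lemma tendsto_x_atBot : Tendsto x atBot (𝓝 a) := tendsto_nhds_iff.2 tendsto_orbitPos_atBot

lemma tendsto_x_atTop : Tendsto x atTop (𝓝 b) := tendsto_nhds_iff.2 tendsto_orbitPos_atTop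

lemma tendsto_y_atBot : Tendsto y atBot (𝓝 b) := by
  simpa only [tendsto_nhds_iff, Function.comp_def, pos, add_zero] using
    tendsto_orbitPos_atBot.const_add 1

lemma tendsto_y_atTop : Tendsto y atTop (𝓝 c) := by
  simpa only [tendsto_nhds_iff, Function.comp_def, pos, one_add_one_eq_two] using
    tendsto_orbitPos_atTop.const_add 1

instance : CompactSpace FiveOrbits := by
  refine ⟨?_⟩
  convert (isCompact_insert_insert_range_of_tendsto tendsto_x_atBot tendsto_x_atTop).union
    (isCompact_insert_insert_range_of_tendsto tendsto_y_atBot tendsto_y_atTop)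
  refine (eq_univ_of_forall fun p => ?_).symm
  cases p <;> simp

def shiftBy (k : ℤ) : FiveOrbits → FiveOrbits
  | a => a
  | b => b
  | c => c
  | x i => x (i + k)
  | y i => y (i + k)

lemma shiftBy_shiftBy (k l : ℤ) (p : FiveOrbits) :
    shiftBy k (shiftBy l p) = shiftBy (k + l) p := by
  cases p <;> simp only [shiftBy, x.injEq, y.injEq] <;> ring

lemma shiftBy_zero (p : FiveOrbits) : shiftBy 0 p = p := by
  cases p <;> simp [shiftBy]

def shift : FiveOrbits ≃ FiveOrbits where
  toFun := shiftBy 1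
  invFun := shiftBy (-1)
  left_inv p := by simp [shiftBy_shiftBy, shiftBy_zero]
  right_inv p := by simp [shiftBy_shiftBy, shiftBy_zero]

lemma shift_zpow_apply (k : ℤ) (p : FiveOrbits) : (shift ^ k) p = shiftBy k p := by
  induction k using Int.induction_on generalizing p with
  | zero => simp [shiftBy_zero]
  | succ k ih => rw [zpow_add_one, Equiv.Perm.mul_apply, ih]; exact shiftBy_shiftBy _ _ _
  | pred k ih =>
    rw [zpow_sub_one, Equiv.Perm.mul_apply, ih, sub_eq_add_neg]; exact shiftBy_shiftBy _ _ _

lemma pos_shift (p : FiveOrbits) : pos (shift p) = realShift (pos p) := by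
  have h0 := orbitPos_pos
  have h1 := orbitPos_lt_one
  cases p <;> simp only [shift, Equiv.coe_fn_mk, shiftBy, pos, realShift]
  · norm_num [orbitStep_zero]
  · norm_num [orbitStep_zero, orbitStep_one]
  · norm_num [orbitStep_one]
  · rw [min_eq_left (h1 _).le, max_eq_right (by linarith [h1 ‹_›]), orbitStep_zero, add_zero,
      orbitStep_orbitPos]
  · rw [min_eq_right (by linarith [h0 ‹_›]), max_eq_left (by linarith [h0 ‹_›]),
      orbitStep_one, add_sub_cancel_left, orbitStep_orbitPos]

lemma continuous_shift : Continuous shift :=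
  isometry_pos.isEmbedding.continuous_iff.2 <| by
    simpa only [Function.comp_def, pos_shift] using
      continuous_realShift.comp isometry_pos.continuous

noncomputable def shiftHomeomorph : FiveOrbits ≃ₜ FiveOrbits :=
  continuous_shift.homeoOfEquivCompactToT2

lemma hiter_shiftHomeomorph (k : ℤ) : hiter shiftHomeomorph k = shiftBy k :=
  funext (shift_zpow_apply k)

def level (i : ℤ) : ℤ := if i < 0 then 0 else if i = 0 then 1 else 2

def cell : FiveOrbits → ℤ
  | a => 0
  | b => 2
  | c => 4
  | x i => level i
  | y i => level i + 2

lemma abs_orbitPos_sub_level_le (i : ℤ) : |orbitPos i - level i / 2| ≤ 1 / 5 := by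
  unfold level
  split_ifs with hneg hzero
  · have hle := strictMono_orbitPos.monotone (show i ≤ -1 by omega)
    rw [orbitPos_neg_one] at hle
    rw [abs_le]; constructor <;> push_cast <;> linarith [orbitPos_pos i]
  · subst hzero; norm_num [orbitPos_zero]
  · have hge := strictMono_orbitPos.monotone (show 1 ≤ i by omega)
    rw [orbitPos_one] at hge
    rw [abs_le]; constructor <;> push_cast <;> linarith [orbitPos_lt_one i]

lemma abs_pos_sub_cell_le (p : FiveOrbits) : |pos p - cell p / 2| ≤ 1 / 5 := by
  cases p with
  | x i => exact abs_orbitPos_sub_level_le i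
  | y i =>
    convert abs_orbitPos_sub_level_le i using 2
    simp only [pos, cell]; push_cast; ring
  | _ => norm_num [pos, cell]

lemma one_div_ten_le_dist_of_cell_ne {p q : FiveOrbits} (h : cell p ≠ cell q) :
    1 / 10 ≤ dist p q := by
  obtain ⟨hp₁, hp₂⟩ := abs_le.1 (abs_pos_sub_cell_le p)
  obtain ⟨hq₁, hq₂⟩ := abs_le.1 (abs_pos_sub_cell_le q)
  rw [dist_eq, le_abs]
  rcases h.lt_or_gt with hlt | hlt
  · have : (cell p : ℝ) + 1 ≤ cell q := by exact_mod_cast hlt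
    right; linarith
  · have : (cell q : ℝ) + 1 ≤ cell p := by exact_mod_cast hlt
    left; linarith

def Spreads (A : Set FiveOrbits) : Prop :=
  ∃ k : ℤ, ∃ p ∈ A, ∃ q ∈ A, ∃ r ∈ A, cell (shiftBy k p) ≠ cell (shiftBy k q) ∧
    cell (shiftBy k p) ≠ cell (shiftBy k r) ∧ cell (shiftBy k q) ≠ cell (shiftBy k r)

section Spreads

variable {A : Set FiveOrbits}

lemma spreads_of_x_x_x {i j l : ℤ} (hi : x i ∈ A) (hj : x j ∈ A) (hl : x l ∈ A)
    (hij : i < j) (hjl : j < l) : Spreads A :=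
  ⟨-j, _, hi, _, hj, _, hl, by simp only [shiftBy, cell, level]; split_ifs <;> omega⟩

lemma spreads_of_y_y_y {i j l : ℤ} (hi : y i ∈ A) (hj : y j ∈ A) (hl : y l ∈ A)
    (hij : i < j) (hjl : j < l) : Spreads A :=
  ⟨-j, _, hi, _, hj, _, hl, by simp only [shiftBy, cell, level]; split_ifs <;> omega⟩

lemma spreads_of_x_x {i j : ℤ} {r : FiveOrbits} (hi : x i ∈ A) (hj : x j ∈ A) (hij : i < j)
    (hr : r ∈ A) (hri : r ≠ x i) (hrj : r ≠ x j) : Spreads A := by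
  rcases r with _ | _ | _ | l | l <;> simp only [ne_eq, x.injEq] at hri hrj
  case x =>
    rcases lt_or_gt_of_ne hri with hli | hil
    · exact spreads_of_x_x_x hr hi hj hli hij
    rcases lt_or_gt_of_ne hrj with hlj | hjl
    · exact spreads_of_x_x_x hi hr hj hil hlj
    · exact spreads_of_x_x_x hi hj hr hij hjl
  all_goals first
    | (refine ⟨-i, _, hi, _, hj, _, hr, ?_⟩
       simp only [shiftBy, cell, level]; split_ifs <;> omega)
    | (refine ⟨-j, _, hi, _, hj, _, hr, ?_⟩
       simp only [shiftBy, cell, level]; split_ifs <;> omega)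

lemma spreads_of_y_y {i j : ℤ} {r : FiveOrbits} (hi : y i ∈ A) (hj : y j ∈ A) (hij : i < j)
    (hr : r ∈ A) (hri : r ≠ y i) (hrj : r ≠ y j) : Spreads A := by
  rcases r with _ | _ | _ | l | l <;> simp only [ne_eq, y.injEq] at hri hrj
  case y =>
    rcases lt_or_gt_of_ne hri with hli | hil
    · exact spreads_of_y_y_y hr hi hj hli hij
    rcases lt_or_gt_of_ne hrj with hlj | hjl
    · exact spreads_of_y_y_y hi hr hj hil hlj
    · exact spreads_of_y_y_y hi hj hr hij hjl
  all_goals first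
    | (refine ⟨-i, _, hi, _, hj, _, hr, ?_⟩
       simp only [shiftBy, cell, level]; split_ifs <;> omega)
    | (refine ⟨-j, _, hi, _, hj, _, hr, ?_⟩
       simp only [shiftBy, cell, level]; split_ifs <;> omega)

lemma spreads_of_fixed_fixed {u v p : FiveOrbits} (hu : u ∈ A) (hv : v ∈ A) (hp : p ∈ A)
    (hu' : u ∈ ({a, b, c} : Set FiveOrbits)) (hv' : v ∈ ({a, b, c} : Set FiveOrbits))
    (huv : u ≠ v) (hp' : p ∉ ({a, b, c} : Set FiveOrbits)) : Spreads A := by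
  rcases p with _ | _ | _ | i | i
  iterate 3 exact absurd (by simp) hp'
  all_goals
    rcases hu' with rfl | rfl | rfl <;> rcases hv' with rfl | rfl | rfl <;>
      first
        | exact absurd rfl huv
        | (refine ⟨-i, _, hp, _, hu, _, hv, ?_⟩
           simp only [shiftBy, cell, level]; split_ifs <;> omega)

lemma spreads_of_encard_eq_four (hA : A.encard = 4) : Spreads A := by
  have hA2 : 2 < A.encard := by rw [hA]; norm_num
  by_cases hx : ∃ i j, i < j ∧ x i ∈ A ∧ x j ∈ A
  · obtain ⟨i, j, hij, hi, hj⟩ := hx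
    obtain ⟨r, hr, hri, hrj⟩ := exists_mem_ne_ne_of_two_lt_encard hA2 (x i) (x j)
    exact spreads_of_x_x hi hj hij hr hri hrj
  by_cases hy : ∃ i j, i < j ∧ y i ∈ A ∧ y j ∈ A
  · obtain ⟨i, j, hij, hi, hj⟩ := hy
    obtain ⟨r, hr, hri, hrj⟩ := exists_mem_ne_ne_of_two_lt_encard hA2 (y i) (y j)
    exact spreads_of_y_y hi hj hij hr hri hrj
  have hcover : A ⊆ (A ∩ {a, b, c}) ∪ (A ∩ range x) ∪ (A ∩ range y) := by
    intro p hp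
    cases p <;> simp [hp]
  have hfix : 1 < (A ∩ {a, b, c}).encard := by
    by_contra! h
    have := (encard_le_encard hcover).trans <| (encard_union_le _ _).trans <|
      add_le_add ((encard_union_le _ _).trans (add_le_add h (encard_inter_range_le_one hx)))
        (encard_inter_range_le_one hy)
    rw [hA] at this
    norm_num at this
  obtain ⟨u, v, ⟨hu, hu'⟩, ⟨hv, hv'⟩, huv⟩ := one_lt_encard_iff.1 hfix
  obtain ⟨p, hp, hp'⟩ := not_subset.1 fun h : A ⊆ {a, b, c} => by
    have := (encard_le_encard h).trans_eq <|
      encard_eq_three.2 ⟨a, b, c, by simp, by simp, by simp, rfl⟩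
    rw [hA] at this
    norm_num at this
  exact spreads_of_fixed_fixed hu hv hp hu' hv' huv hp'

end Spreads

lemma mnExpansiveWith_four_two : MNExpansiveWith shiftHomeomorph 4 2 (1 / 20) := by
  intro A hA
  obtain ⟨k, p, hp, q, hq, r, hr, hpq, hpr, hqr⟩ := spreads_of_encard_eq_four hA
  have far {u v : FiveOrbits} (h : cell u ≠ cell v) : (1 / 20 : ℝ) < dist u v := by
    linarith [one_div_ten_le_dist_of_cell_ne h]
  refine ⟨k, ?_⟩
  rw [hiter_shiftHomeomorph]
  exact two_lt_dCard_of_dist (by norm_num) (mem_image_of_mem _ hp) (mem_image_of_mem _ hq)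
    (mem_image_of_mem _ hr) (far hpq) (far hpr) (far hqr)

lemma not_mnExpansive_three_two : ¬ MNExpansive shiftHomeomorph 3 2 := by
  rintro ⟨δ, hδ, hexp⟩
  obtain ⟨M, hM⟩ := eventually_atTop.1 <|
    tendsto_x_atTop.eventually (Metric.closedBall_mem_nhds b hδ)
  obtain ⟨N, hN⟩ := eventually_atBot.1 <|
    tendsto_y_atBot.eventually (Metric.closedBall_mem_nhds b hδ)
  have h3 : ({x M, y N, b} : Set FiveOrbits).encard = 3 :=
    encard_eq_three.2 ⟨_, _, _, by simp, by simp, by simp, rfl⟩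
  obtain ⟨k, hk⟩ := hexp _ h3
  rw [hiter_shiftHomeomorph, image_insert_eq, image_insert_eq, image_singleton] at hk
  refine hk.not_ge ?_
  change dCard δ {x (M + k), y (N + k), b} ≤ 2
  rcases le_total 0 k with hk0 | hk0
  · rw [pair_comm]
    exact dCard_le_two_of_dist_le (hM _ (by omega))
  · rw [insert_comm, pair_comm]
    exact dCard_le_two_of_dist_le (hN _ (by omega))

end FiveOrbits

theorem stmt18 : ∃ (X : Type) (_ : MetricSpace X) (_ : CompactSpace X) (f : X ≃ₜ X),
    MNExpansive f 4 2 ∧ ¬ MNExpansive f 3 2 :=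
  ⟨FiveOrbits, inferInstance, inferInstance, FiveOrbits.shiftHomeomorph,
    ⟨1 / 20, by norm_num, FiveOrbits.mnExpansiveWith_four_two⟩,
    FiveOrbits.not_mnExpansive_three_two⟩
end
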